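/- Assume the invariant setting with S_A ≠ ∅ and L_A \ S_A ≠ ∅, and write p_A = max S_A and q_A = min(L_A \ S_A). Assume a_A < p_A, q_A < a_B, and q_A is less than every element of L_B \ S_B (case 4 of the case analysis). Then: S'_A = S_A \ {a_A}; S'_B = S_B; q_A is the A-side peek, i.e. q_A = min((L_A \ {a_A}) \ S'_A), and q_A is less than every element of (L_B ∪ {a_B}) \ S'_B; and H_h(L') = (H_h(L_A ∪ L_B) \ {a_A}) ∪ {q_A} = S'_A ∪ {q_A} ∪ S_B. -/

import Mathlib

/-- `smallSet m L` is `H_m(L)`: the set of the `m` smallest elements of the finset `L`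
(the first `m` entries of the increasing enumeration of `L`). -/
def smallSet {α : Type*} [LinearOrder α] (m : ℕ) (L : Finset α) : Finset α :=
  ((L.sort (· ≤ ·)).take m).toFinset

/-! A subset `S ⊆ L` lying entirely below `L \ S` is determined by its cardinality, so it is
`H_{|S|}(L)`. Here `S_A`, `S_B` are such initial segments of `L_A`, `L_B`; deleting
`a_A ∈ S_A` keeps `S_A \ {a_A}` initial, and adding `a_B > q_A` keeps `S_B` initial. In the
merged list `q_A` is the least element above `H_h(L_A ∪ L_B)`, so trading `a_A` for `a_B`
shifts the boundary by one and `q_A` takes the place of `a_A`. -/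

open Finset

section InitialSegment

variable {α : Type*} [LinearOrder α]

def IsInitialSegment (S L : Finset α) : Prop :=
  S ⊆ L ∧ ∀ x ∈ S, ∀ y ∈ L \ S, x < y

theorem card_smallSet (m : ℕ) (L : Finset α) : #(smallSet m L) = min m #L := by
  rw [smallSet, List.card_toFinset,
    List.Nodup.dedup ((List.take_sublist m _).nodup (L.sort_nodup _)),
    List.length_take, length_sort]

theorem isInitialSegment_smallSet (m : ℕ) (L : Finset α) :
    IsInitialSegment (smallSet m L) L := by
  set l := L.sort (· ≤ ·)
  refine ⟨fun x hx => ?_, fun x hx y hy => ?_⟩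
  · rw [smallSet, List.mem_toFinset] at hx
    exact (mem_sort _).1 (List.take_subset m l hx)
  · rw [smallSet, List.mem_toFinset] at hx
    rw [mem_sdiff, smallSet, List.mem_toFinset] at hy
    have hyl : y ∈ l.take m ++ l.drop m := by
      rw [List.take_append_drop]; exact (mem_sort _).2 hy.1
    have hsorted : (l.take m ++ l.drop m).Pairwise (· < ·) := by
      rw [List.take_append_drop]; exact L.sortedLT_sort.pairwise
    exact (List.pairwise_append.1 hsorted).2.2 x hx y
      ((List.mem_append.1 hyl).resolve_left hy.2)

namespace IsInitialSegment

variable {S T L L' : Finset α}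

theorem mem_of_lt (hS : IsInitialSegment S L) {x y : α} (hx : x ∈ S) (hy : y ∈ L)
    (hyx : y < x) : y ∈ S := by
  by_contra hyS
  exact (hS.2 x hx y (mem_sdiff.2 ⟨hy, hyS⟩)).asymm hyx

theorem subset_of_notMem (hS : IsInitialSegment S L) (hT : IsInitialSegment T L) {x : α}
    (hx : x ∈ S) (hxT : x ∉ T) : T ⊆ S :=
  fun _ hy => hS.mem_of_lt hx (hT.1 hy) (hT.2 _ hy x (mem_sdiff.2 ⟨hS.1 hx, hxT⟩))

theorem eq_of_card_eq (hS : IsInitialSegment S L) (hT : IsInitialSegment T L)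
    (hcard : #S = #T) : S = T := by
  by_cases hST : S ⊆ T
  · exact eq_of_subset_of_card_le hST hcard.ge
  · obtain ⟨x, hxS, hxT⟩ := not_subset.1 hST
    exact (eq_of_subset_of_card_le (hS.subset_of_notMem hT hxS hxT) hcard.le).symm

theorem smallSet_card_eq (hS : IsInitialSegment S L) : smallSet #S L = S :=
  (isInitialSegment_smallSet _ L).eq_of_card_eq hS <| by
    rw [card_smallSet, min_eq_left (card_le_card hS.1)]

theorem of_union_left {S' : Finset α} (h : IsInitialSegment (S ∪ S') (L ∪ L'))
    (hS : S ⊆ L) (hS' : S' ⊆ L') (hdisj : Disjoint L L') : IsInitialSegment S L :=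
  ⟨hS, fun x hx y hy => by
    rw [mem_sdiff] at hy
    refine h.2 x (mem_union_left _ hx) y (mem_sdiff.2 ⟨mem_union_left _ hy.1, ?_⟩)
    exact notMem_union.2 ⟨hy.2, fun hyS' => disjoint_left.1 hdisj hy.1 (hS' hyS')⟩⟩

theorem of_union_right {S' : Finset α} (h : IsInitialSegment (S ∪ S') (L ∪ L'))
    (hS : S ⊆ L) (hS' : S' ⊆ L') (hdisj : Disjoint L L') : IsInitialSegment S' L' := by
  rw [union_comm S, union_comm L] at h
  exact h.of_union_left hS' hS hdisj.symm

theorem sdiff_singleton (hS : IsInitialSegment S L) (a : α) :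
    IsInitialSegment (S \ {a}) (L \ {a}) :=
  ⟨sdiff_subset_sdiff hS.1 le_rfl, fun x hx y hy => by
    simp only [mem_sdiff, mem_singleton, not_and, not_not] at hx hy
    exact hS.2 x hx.1 y (mem_sdiff.2 ⟨hy.1.1, fun hyS => hy.1.2 (hy.2 hyS)⟩)⟩

theorem union_singleton_right (hS : IsInitialSegment S L) {b : α} (hb : ∀ x ∈ S, x < b) :
    IsInitialSegment S (L ∪ {b}) :=
  ⟨hS.1.trans subset_union_left, fun x hx y hy => by
    rw [mem_sdiff, mem_union, mem_singleton] at hy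
    rcases hy with ⟨hyL | rfl, hyS⟩
    · exact hS.2 x hx y (mem_sdiff.2 ⟨hyL, hyS⟩)
    · exact hb x hx⟩

theorem union_singleton_of_isLeast (hS : IsInitialSegment S L) {q : α}
    (hq : IsLeast (L \ S : Finset α) q) : IsInitialSegment (S ∪ {q}) L :=
  ⟨union_subset hS.1 (singleton_subset_iff.2 (mem_sdiff.1 hq.1).1), fun x hx y hy => by
    rw [mem_sdiff, mem_union, mem_singleton, not_or] at hy
    have hqy : q < y := lt_of_le_of_ne (hq.2 (mem_sdiff.2 ⟨hy.1, hy.2.1⟩)) (Ne.symm hy.2.2)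
    rcases mem_union.1 hx with hxS | hxq
    · exact (hS.2 x hxS q hq.1).trans hqy
    · exact mem_singleton.1 hxq ▸ hqy⟩

theorem smallSet_card_sub_one_sdiff_singleton (hS : IsInitialSegment S L) {a : α}
    (ha : a ∈ S) : smallSet (#S - 1) (L \ {a}) = S \ {a} := by
  rw [← card_erase_of_mem ha, ← sdiff_singleton_eq_erase]
  exact (hS.sdiff_singleton a).smallSet_card_eq

theorem smallSet_card_exchange (hS : IsInitialSegment S L) {a q b : α} (ha : a ∈ S)
    (hq : IsLeast (L \ S : Finset α) q) (hqb : q < b) :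
    smallSet #S ((L \ {a}) ∪ {b}) = (S \ {a}) ∪ {q} := by
  have hqS : q ∉ S := (mem_sdiff.1 hq.1).2
  have hle : ∀ x ∈ S ∪ {q}, x ≤ q := fun x hx => (mem_union.1 hx).elim
    (fun hxS => (hS.2 x hxS q hq.1).le) (fun hxq => (mem_singleton.1 hxq).le)
  have hS' : IsInitialSegment ((S ∪ {q}) \ {a}) ((L \ {a}) ∪ {b}) :=
    ((hS.union_singleton_of_isLeast hq).sdiff_singleton a).union_singleton_right
      fun x hx => (hle x (mem_sdiff.1 hx).1).trans_lt hqb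
  have hcard : #((S ∪ {q}) \ {a}) = #S := by
    rw [sdiff_singleton_eq_erase, card_erase_of_mem (mem_union_left _ ha),
      card_union_of_disjoint (disjoint_singleton_right.2 hqS), card_singleton, Nat.add_sub_cancel]
  have hqa : a ∉ ({q} : Finset α) := mem_singleton.not.2 (ne_of_mem_of_not_mem ha hqS)
  rw [← hcard, hS'.smallSet_card_eq, union_sdiff_distrib, sdiff_singleton_eq_erase a {q},
    erase_eq_of_notMem hqa]

end IsInitialSegment

theorem isLeast_union_sdiff_union {S S' L L' : Finset α} {q : α}
    (hq : IsLeast (L \ S : Finset α) q) (hq' : ∀ y ∈ L' \ S', q ≤ y) (hqS' : q ∉ S') :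
    IsLeast ((L ∪ L') \ (S ∪ S') : Finset α) q := by
  refine ⟨?_, fun y hy => ?_⟩
  · have hqLS := mem_sdiff.1 (mem_coe.1 hq.1)
    rw [mem_coe, mem_sdiff]
    exact ⟨mem_union_left _ hqLS.1, notMem_union.2 ⟨hqLS.2, hqS'⟩⟩
  · rw [mem_coe, mem_sdiff, mem_union, notMem_union] at hy
    rcases hy with ⟨hyL | hyL', hyS, hyS'⟩
    · exact hq.2 (mem_sdiff.2 ⟨hyL, hyS⟩)
    · exact hq' y (mem_sdiff.2 ⟨hyL', hyS'⟩)

end InitialSegment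

theorem invariant_case4_general {α : Type*} [LinearOrder α] (h : ℕ)
    (LA LB SA SB : Finset α) (hdisj : Disjoint LA LB)
    (hcard : LA.card + LB.card = 2 * h + 1)
    (hSA : SA ⊆ LA) (hSB : SB ⊆ LB)
    (hinv : SA ∪ SB = smallSet h (LA ∪ LB))
    (aA aB : α) (haA : aA ∈ LA)
    (hSAne : SA.Nonempty) (hQAne : (LA \ SA).Nonempty)
    (h1 : aA < SA.max' hSAne)
    (h2 : (LA \ SA).min' hQAne < aB)
    (h3 : ∀ x ∈ LB \ SB, (LA \ SA).min' hQAne < x) :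
    smallSet (SA.card - 1) (LA \ {aA}) = SA \ {aA} ∧
    smallSet SB.card (LB ∪ {aB}) = SB ∧
    ((LA \ {aA}) \ smallSet (SA.card - 1) (LA \ {aA})).min =
      ((LA \ SA).min' hQAne : WithTop α) ∧
    (∀ x ∈ (LB ∪ {aB}) \ smallSet SB.card (LB ∪ {aB}), (LA \ SA).min' hQAne < x) ∧
    smallSet h ((LA \ {aA}) ∪ LB ∪ {aB}) =
      (smallSet h (LA ∪ LB) \ {aA}) ∪ {(LA \ SA).min' hQAne} ∧
    smallSet h ((LA \ {aA}) ∪ LB ∪ {aB}) =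
      smallSet (SA.card - 1) (LA \ {aA}) ∪ {(LA \ SA).min' hQAne} ∪ SB := by
  set q := (LA \ SA).min' hQAne
  have hT : IsInitialSegment (SA ∪ SB) (LA ∪ LB) := hinv ▸ isInitialSegment_smallSet h _
  have hTcard : #(SA ∪ SB) = h := by
    rw [hinv, card_smallSet, card_union_of_disjoint hdisj, hcard]; omega
  have hA := hT.of_union_left hSA hSB hdisj
  have haSA : aA ∈ SA := hA.mem_of_lt (max'_mem _ _) haA h1
  have haSB : aA ∉ SB := fun ha => disjoint_left.1 hdisj haA (hSB ha)
  have hq : IsLeast ((LA ∪ LB) \ (SA ∪ SB) : Finset α) q :=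
    isLeast_union_sdiff_union (isLeast_min' _ _) (fun y hy => (h3 y hy).le)
      fun hqB => disjoint_left.1 hdisj (mem_sdiff.1 (min'_mem _ hQAne)).1 (hSB hqB)
  have hSA' := hA.smallSet_card_sub_one_sdiff_singleton haSA
  have hSB' : smallSet #SB (LB ∪ {aB}) = SB :=
    ((hT.of_union_right hSA hSB hdisj).union_singleton_right fun x hx =>
      (hT.2 x (mem_union_right _ hx) q hq.1).trans h2).smallSet_card_eq
  have hL : (LA ∪ LB) \ {aA} = (LA \ {aA}) ∪ LB := by
    rw [union_sdiff_distrib, sdiff_singleton_eq_erase aA LB,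
      erase_eq_of_notMem (disjoint_left.1 hdisj haA)]
  have hH' : smallSet h ((LA \ {aA}) ∪ LB ∪ {aB}) = ((SA ∪ SB) \ {aA}) ∪ {q} := by
    rw [← hL, ← hTcard]; exact hT.smallSet_card_exchange (mem_union_left _ haSA) hq h2
  refine ⟨hSA', hSB', ?_, ?_, by rw [hH', hinv], ?_⟩
  · rw [hSA', sdiff_sdiff_sdiff_cancel_right (singleton_subset_iff.2 haSA), coe_min']
  · rw [hSB']
    intro x hx
    rw [mem_sdiff, mem_union, mem_singleton] at hx
    rcases hx with ⟨hxB | rfl, hxS⟩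
    exacts [h3 x (mem_sdiff.2 ⟨hxB, hxS⟩), h2]
  · rw [hH', hSA', union_sdiff_distrib, sdiff_singleton_eq_erase aA SB, erase_eq_of_notMem haSB,
      union_right_comm]

/-- case 4 of the case analysis.  Invariant setting: `L_A, L_B` disjoint
with `|L_A| + |L_B| = 2h+1`, `S_A ⊆ L_A`, `S_B ⊆ L_B`, `S_A ∪ S_B = H_h(L_A ∪ L_B)`,
`a_A ∈ L_A`, `a_B ∉ L_A ∪ L_B`; `L' = (L_A \ {a_A}) ∪ L_B ∪ {a_B}`; updated small sets
`S'_A = H_{|S_A|-1}(L_A \ {a_A})` and `S'_B = H_{|S_B|}(L_B ∪ {a_B})`.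
Assume `S_A ≠ ∅`, `L_A \ S_A ≠ ∅`, `a_A < p_A = max S_A`, `q_A = min(L_A \ S_A) < a_B`,
and `q_A` is less than every element of `L_B \ S_B`.  Then `S'_A = S_A \ {a_A}`,
`S'_B = S_B`, `q_A` is the A-side peek (`q_A = min((L_A \ {a_A}) \ S'_A)`) and is less
than every element of `(L_B ∪ {a_B}) \ S'_B`, and
`H_h(L') = (H_h(L_A ∪ L_B) \ {a_A}) ∪ {q_A} = S'_A ∪ {q_A} ∪ S_B`. -/
theorem invariant_case4 {α : Type*} [LinearOrder α] (h : ℕ)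
    (LA LB SA SB : Finset α) (hdisj : Disjoint LA LB)
    (hcard : LA.card + LB.card = 2 * h + 1)
    (hSA : SA ⊆ LA) (hSB : SB ⊆ LB)
    (hinv : SA ∪ SB = smallSet h (LA ∪ LB))
    (aA aB : α) (haA : aA ∈ LA) (haB : aB ∉ LA ∪ LB)
    (hSAne : SA.Nonempty) (hQAne : (LA \ SA).Nonempty)
    (h1 : aA < SA.max' hSAne)
    (h2 : (LA \ SA).min' hQAne < aB)
    (h3 : ∀ x ∈ LB \ SB, (LA \ SA).min' hQAne < x) :
    smallSet (SA.card - 1) (LA \ {aA}) = SA \ {aA} ∧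
    smallSet SB.card (LB ∪ {aB}) = SB ∧
    ((LA \ {aA}) \ smallSet (SA.card - 1) (LA \ {aA})).min =
      ((LA \ SA).min' hQAne : WithTop α) ∧
    (∀ x ∈ (LB ∪ {aB}) \ smallSet SB.card (LB ∪ {aB}), (LA \ SA).min' hQAne < x) ∧
    smallSet h ((LA \ {aA}) ∪ LB ∪ {aB}) =
      (smallSet h (LA ∪ LB) \ {aA}) ∪ {(LA \ SA).min' hQAne} ∧
    smallSet h ((LA \ {aA}) ∪ LB ∪ {aB}) =
      smallSet (SA.card - 1) (LA \ {aA}) ∪ {(LA \ SA).min' hQAne} ∪ SB :=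
  invariant_case4_general h LA LB SA SB hdisj hcard hSA hSB hinv aA aB haA hSAne hQAne h1 h2 h3
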